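/- arXiv:1404.7779 — 2 statements merged into one kernel-verified Lean document; each statement's English description precedes it below -/
import Mathlib

section
/- Let ν₁, ν₂ be measures on ℝ with ν₁ ≪ ν₂ and finite Hellinger-type integral H²(ν₁,ν₂) = ∫(√(dν₁/dν₂) - 1)² dν₂ < ∞. If moreover ∫ (√(dν₁/dν₂)(y) + 1)² ν₂(dy) restricted to |y| ≤ 1 is controlled by ∫_{|y|≤1} y² ν₂(dy) < ∞ (ν₂ a Lévy measure), then ∫_{|y|≤1} |y| |dν₁/dν₂(y) - 1| ν₂(dy) < ∞; in particular the quantity η = ∫_{|y|≤1} y (ν₁ - ν₂)(dy) is well defined and finite. -/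
/-! With `s = √h`, one has `|h - 1| = |s - 1| (s + 1)`, so AM–GM gives
`|y| |h - 1| ≤ (s - 1)² / 2 + y² (s + 1)² / 2`; since `(s + 1)² ≤ 2 (s - 1)² + 8`, for `|y| ≤ 1`
this is at most `3/2 (s - 1)² + 4 y²`. Integrating with `h = dν₁/dν₂` over `{|y| ≤ 1}` bounds
`∫ |y| |h - 1| dν₂` by the Hellinger integral plus the second moment of `ν₂` near the origin. -/

open MeasureTheory ENNReal

theorem abs_mul_abs_sub_one_le {y h : ℝ} (hy : |y| ≤ 1) (hh : 0 ≤ h) :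
    |y| * |h - 1| ≤ 3 / 2 * (Real.sqrt h - 1) ^ 2 + 4 * y ^ 2 := by
  set s := Real.sqrt h
  have hs : 0 ≤ s := Real.sqrt_nonneg h
  have hfactor : |h - 1| = |s - 1| * (s + 1) := by
    rw [← Real.sq_sqrt hh, show s ^ 2 - 1 = (s - 1) * (s + 1) by ring, abs_mul,
      abs_of_nonneg (by linarith : 0 ≤ s + 1)]
  have hamgm : |y| * (|s - 1| * (s + 1)) ≤ (s - 1) ^ 2 / 2 + y ^ 2 * (s + 1) ^ 2 / 2 := by
    nlinarith [sq_nonneg (|s - 1| - |y| * (s + 1)), sq_abs (s - 1), sq_abs y]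
  have hsq : (s + 1) ^ 2 ≤ 2 * (s - 1) ^ 2 + 8 := by nlinarith [sq_nonneg (s - 3)]
  have hy2 : y ^ 2 ≤ 1 := by nlinarith [sq_abs y, abs_nonneg y]
  rw [hfactor]
  nlinarith [mul_le_mul_of_nonneg_left hsq (sq_nonneg y),
    mul_le_mul_of_nonneg_right hy2 (sq_nonneg (s - 1))]

theorem setLIntegral_abs_mul_abs_toReal_sub_one_le (μ : Measure ℝ) {f : ℝ → ℝ≥0∞}
    (hf : Measurable f) :
    ∫⁻ y in {y : ℝ | |y| ≤ 1}, ENNReal.ofReal (|y| * |(f y).toReal - 1|) ∂μ ≤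
      ENNReal.ofReal (3 / 2) * ∫⁻ y, ENNReal.ofReal ((Real.sqrt (f y).toReal - 1) ^ 2) ∂μ +
        4 * ∫⁻ y in {y : ℝ | |y| ≤ 1}, ENNReal.ofReal (y ^ 2) ∂μ := by
  have hpointwise : ∀ y ∈ {y : ℝ | |y| ≤ 1}, ENNReal.ofReal (|y| * |(f y).toReal - 1|) ≤
      ENNReal.ofReal (3 / 2) * ENNReal.ofReal ((Real.sqrt (f y).toReal - 1) ^ 2) +
        4 * ENNReal.ofReal (y ^ 2) := fun y hy => by
    rw [← ofReal_mul (by norm_num), ← ofReal_ofNat 4, ← ofReal_mul (by norm_num),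
      ← ofReal_add (by positivity) (by positivity)]
    exact ofReal_le_ofReal (abs_mul_abs_sub_one_le hy toReal_nonneg)
  calc _ ≤ _ := setLIntegral_mono (by fun_prop) hpointwise
    _ = ENNReal.ofReal (3 / 2) *
          ∫⁻ y in {y : ℝ | |y| ≤ 1}, ENNReal.ofReal ((Real.sqrt (f y).toReal - 1) ^ 2) ∂μ +
        4 * ∫⁻ y in {y : ℝ | |y| ≤ 1}, ENNReal.ofReal (y ^ 2) ∂μ := by
      rw [lintegral_add_left (by fun_prop), lintegral_const_mul _ (by fun_prop),
        lintegral_const_mul _ (by fun_prop)]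
    _ ≤ _ := by gcongr; exact Measure.restrict_le_self

theorem eta_well_defined_general (ν₁ ν₂ : Measure ℝ)
    (hH : ∫⁻ y, ENNReal.ofReal ((Real.sqrt ((ν₁.rnDeriv ν₂ y).toReal) - 1) ^ 2) ∂ν₂ < ⊤)
    (hy2 : ∫⁻ y in {y : ℝ | |y| ≤ 1}, ENNReal.ofReal (y ^ 2) ∂ν₂ < ⊤) :
    (∫⁻ y in {y : ℝ | |y| ≤ 1},
        ENNReal.ofReal (|y| * |(ν₁.rnDeriv ν₂ y).toReal - 1|) ∂ν₂ < ⊤) ∧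
    IntegrableOn (fun y => y * ((ν₁.rnDeriv ν₂ y).toReal - 1)) {y : ℝ | |y| ≤ 1} ν₂ := by
  have hmeas := ν₁.measurable_rnDeriv ν₂
  have hfin := (setLIntegral_abs_mul_abs_toReal_sub_one_le ν₂ hmeas).trans_lt
    (add_lt_top.2 ⟨mul_lt_top ofReal_lt_top hH, mul_lt_top (by norm_num) hy2⟩)
  refine ⟨hfin, by fun_prop, ?_⟩
  rw [hasFiniteIntegral_iff_norm]
  simpa only [norm_mul, Real.norm_eq_abs] using hfin

theorem eta_well_defined (ν₁ ν₂ : Measure ℝ) [SigmaFinite ν₁] [SigmaFinite ν₂]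
    (hac : ν₁ ≪ ν₂)
    (hH : ∫⁻ y, ENNReal.ofReal ((Real.sqrt ((ν₁.rnDeriv ν₂ y).toReal) - 1) ^ 2) ∂ν₂ < ⊤)
    (hy2 : ∫⁻ y in {y : ℝ | |y| ≤ 1}, ENNReal.ofReal (y ^ 2) ∂ν₂ < ⊤) :
    (∫⁻ y in {y : ℝ | |y| ≤ 1},
        ENNReal.ofReal (|y| * |(ν₁.rnDeriv ν₂ y).toReal - 1|) ∂ν₂ < ⊤) ∧
    IntegrableOn (fun y => y * ((ν₁.rnDeriv ν₂ y).toReal - 1)) {y : ℝ | |y| ≤ 1} ν₂ :=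
  eta_well_defined_general ν₁ ν₂ hH hy2
end

section
/- Let X be a real random variable and suppose the law of X is a product structure X = C + D with C and D independent real random variables satisfying E[e^C] = 1 and E[e^D] = 1. Then E|1 - e^{C+D}| ≤ E|1 - e^D| + E|1 - e^C|. -/
/-!
With `a = eᶜ` and `b = eᵈ` one has `1 - ab = ((1 + a)/2)(1 - b) + ((1 + b)/2)(1 - a)`, and both
coefficients are positive, so `|1 - e^(c+d)| ≤ ((1 + eᶜ)/2)|1 - eᵈ| + ((1 + eᵈ)/2)|1 - eᶜ|`.
Take expectations at `c = C`, `d = D`: by independence each term factors, and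
`E[(1 + e^C)/2] = E[(1 + e^D)/2] = 1`.
-/

open MeasureTheory ProbabilityTheory Real

lemma one_sub_exp_add_eq (x y : ℝ) :
    1 - exp (x + y) = (1 + exp x) / 2 * (1 - exp y) + (1 + exp y) / 2 * (1 - exp x) := by
  rw [exp_add]
  ring

lemma abs_one_sub_exp_add_le (x y : ℝ) :
    |1 - exp (x + y)| ≤ (1 + exp x) / 2 * |1 - exp y| + (1 + exp y) / 2 * |1 - exp x| := by
  have hx : 0 ≤ (1 + exp x) / 2 := by positivity
  have hy : 0 ≤ (1 + exp y) / 2 := by positivity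
  calc |1 - exp (x + y)|
      ≤ |(1 + exp x) / 2 * (1 - exp y)| + |(1 + exp y) / 2 * (1 - exp x)| := by
        rw [one_sub_exp_add_eq]
        exact abs_add_le _ _
    _ = (1 + exp x) / 2 * |1 - exp y| + (1 + exp y) / 2 * |1 - exp x| := by
        rw [abs_mul, abs_mul, abs_of_nonneg hx, abs_of_nonneg hy]

namespace ProbabilityTheory

variable {Ω : Type*} [MeasurableSpace Ω] {μ : Measure Ω}

lemma IndepFun.integral_mul_eq_right_of_integral_eq_one {f g : Ω → ℝ} (hfg : IndepFun f g μ)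
    (hf : AEStronglyMeasurable f μ) (hg : AEStronglyMeasurable g μ) (hf₁ : ∫ ω, f ω ∂μ = 1) :
    ∫ ω, f ω * g ω ∂μ = ∫ ω, g ω ∂μ := by
  rw [hfg.integral_fun_mul_eq_mul_integral hf hg, hf₁, one_mul]

variable {C D : Ω → ℝ}

lemma IndepFun.half_one_add_exp_abs_one_sub_exp (hCD : IndepFun C D μ) :
    IndepFun (fun ω => (1 + exp (C ω)) / 2) (fun ω => |1 - exp (D ω)|) μ :=
  hCD.comp (φ := fun t => (1 + exp t) / 2) (ψ := fun t => |1 - exp t|) (by fun_prop) (by fun_prop)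

lemma IndepFun.integrable_half_one_add_exp_mul_abs_one_sub_exp [IsFiniteMeasure μ]
    (hCD : IndepFun C D μ) (hC : Integrable (fun ω => exp (C ω)) μ)
    (hD : Integrable (fun ω => exp (D ω)) μ) :
    Integrable (fun ω => (1 + exp (C ω)) / 2 * |1 - exp (D ω)|) μ :=
  hCD.half_one_add_exp_abs_one_sub_exp.integrable_mul
    (((integrable_const 1).add hC).div_const 2) ((integrable_const 1).sub hD).abs

variable [IsProbabilityMeasure μ]

lemma integral_half_one_add_exp (hC : Integrable (fun ω => exp (C ω)) μ)
    (hEC : ∫ ω, exp (C ω) ∂μ = 1) :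
    ∫ ω, (1 + exp (C ω)) / 2 ∂μ = 1 := by
  rw [integral_div, integral_add (integrable_const 1) hC, hEC]
  simp

lemma IndepFun.integral_half_one_add_exp_mul_abs_one_sub_exp (hCD : IndepFun C D μ)
    (hC : Integrable (fun ω => exp (C ω)) μ) (hEC : ∫ ω, exp (C ω) ∂μ = 1)
    (hD : AEStronglyMeasurable (fun ω => exp (D ω)) μ) :
    ∫ ω, (1 + exp (C ω)) / 2 * |1 - exp (D ω)| ∂μ = ∫ ω, |1 - exp (D ω)| ∂μ :=
  hCD.half_one_add_exp_abs_one_sub_exp.integral_mul_eq_right_of_integral_eq_one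
    (((integrable_const 1).add hC).div_const 2).aestronglyMeasurable
    (aestronglyMeasurable_const.sub hD).norm (integral_half_one_add_exp hC hEC)

end ProbabilityTheory

theorem abs_one_sub_exp_add_indep
    {Ω : Type*} [MeasurableSpace Ω] (μ : Measure Ω) [IsProbabilityMeasure μ]
    (C D : Ω → ℝ) (hCD : IndepFun C D μ)
    (hC : Integrable (fun ω => Real.exp (C ω)) μ)
    (hD : Integrable (fun ω => Real.exp (D ω)) μ)
    (hEC : ∫ ω, Real.exp (C ω) ∂μ = 1)
    (hED : ∫ ω, Real.exp (D ω) ∂μ = 1) :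
    ∫ ω, |1 - Real.exp (C ω + D ω)| ∂μ ≤
      (∫ ω, |1 - Real.exp (D ω)| ∂μ) + ∫ ω, |1 - Real.exp (C ω)| ∂μ := by
  have hCD' := hCD.integrable_half_one_add_exp_mul_abs_one_sub_exp hC hD
  have hDC' := hCD.symm.integrable_half_one_add_exp_mul_abs_one_sub_exp hD hC
  calc ∫ ω, |1 - exp (C ω + D ω)| ∂μ
      ≤ ∫ ω, ((1 + exp (C ω)) / 2 * |1 - exp (D ω)| + (1 + exp (D ω)) / 2 * |1 - exp (C ω)|) ∂μ :=
        integral_mono_of_nonneg (ae_of_all _ fun _ => abs_nonneg _) (hCD'.add hDC')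
          (ae_of_all _ fun ω => abs_one_sub_exp_add_le (C ω) (D ω))
    _ = (∫ ω, |1 - exp (D ω)| ∂μ) + ∫ ω, |1 - exp (C ω)| ∂μ := by
        rw [integral_add hCD' hDC',
          hCD.integral_half_one_add_exp_mul_abs_one_sub_exp hC hEC hD.aestronglyMeasurable,
          hCD.symm.integral_half_one_add_exp_mul_abs_one_sub_exp hD hED hC.aestronglyMeasurable]
end
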